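/- Converse (Pusz–Woronowicz–Lenard): if a faithful state σ on ℂ^d is completely passive with respect to H (i.e., ⊗^n σ is passive with respect to H^(n) for all n), and H has at least two distinct eigenvalues, then σ = exp(−βH)/tr(exp(−βH)) for some β ≥ 0. -/

import Mathlib

open Matrix BigOperators
open scoped Classical ComplexOrder

noncomputable section

def energy {ι : Type*} [Fintype ι] (H ρ : Matrix ι ι ℂ) : ℝ :=
  (Matrix.trace (ρ * H)).re

def IsDensity {ι : Type*} [Fintype ι] [DecidableEq ι] (ρ : Matrix ι ι ℂ) : Prop :=
  ρ.PosSemidef ∧ ρ.trace = 1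

def IsPassive {ι : Type*} [Fintype ι] [DecidableEq ι] (H σ : Matrix ι ι ℂ) : Prop :=
  ∀ U ∈ Matrix.unitaryGroup ι ℂ, energy H σ ≤ energy H (U * σ * star U)

def vnEntropy {ι : Type*} [Fintype ι] [DecidableEq ι] (ρ : Matrix ι ι ℂ) : ℝ :=
  if h : ρ.IsHermitian then ∑ i, Real.negMulLog (h.eigenvalues i) else 0

def gibbs {ι : Type*} [Fintype ι] [DecidableEq ι] (H : Matrix ι ι ℂ) (β : ℝ) :
    Matrix ι ι ℂ :=
  (Matrix.trace (NormedSpace.exp ((-β : ℂ) • H)))⁻¹ • NormedSpace.exp ((-β : ℂ) • H)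

def tensPow {d : ℕ} (n : ℕ) (ρ : Matrix (Fin d) (Fin d) ℂ) :
    Matrix (Fin n → Fin d) (Fin n → Fin d) ℂ :=
  Matrix.of fun i j => ∏ m, ρ (i m) (j m)

def sumHam {d : ℕ} (n : ℕ) (H : Matrix (Fin d) (Fin d) ℂ) :
    Matrix (Fin n → Fin d) (Fin n → Fin d) ℂ :=
  Matrix.of fun i j => ∑ m, H (i m) (j m) * ∏ l ∈ Finset.univ.erase m, (if i l = j l then (1:ℂ) else 0)

/-
Passivity of `σ` for `H` forces `σ H = H σ`: along the unitary path `exp (t X)` with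
`X = σ H - H σ` the energy of `exp (t X) σ exp (t X)*` is minimal at `t = 0`, and its first
variation there is `-tr (X* X)`. Hence `H` and `σ` are diagonal in a common orthonormal basis, with
eigenvalues `e` and `q`. Its tensor powers diagonalize `H^(n)` and `σ^⊗n`, and passivity against
the permutation unitaries of the product basis says that `∏ m, q (a m)` is antitone in
`∑ m, e (a m)` over tuples `a`. Comparing the tuples `(i^m, k^n)` and `(j^m, l^n)` for all
`m, n` (Lenard's argument) forces `log q = C - β e` with `β ≥ 0`, and the trace normalization
identifies `σ` with `gibbs H β`.
-/

namespace Matrix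

section PiKronecker

variable {κ ι R : Type*} [Fintype κ]

def piKronecker [CommMonoid R] (A : κ → Matrix ι ι R) : Matrix (κ → ι) (κ → ι) R :=
  of fun i j => ∏ m, A m (i m) (j m)

theorem piKronecker_mul [DecidableEq κ] [Fintype ι] [CommSemiring R] (A B : κ → Matrix ι ι R) :
    piKronecker A * piKronecker B = piKronecker (A * B) := by
  ext i j
  simp only [piKronecker, mul_apply, of_apply, Pi.mul_apply, Finset.prod_univ_sum,
    Fintype.piFinset_univ, Finset.prod_mul_distrib]

theorem piKronecker_diagonal [DecidableEq ι] [CommMonoidWithZero R] (v : κ → ι → R) :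
    piKronecker (fun m => diagonal (v m)) = diagonal fun a => ∏ m, v m (a m) := by
  ext i j
  by_cases h : i = j
  · subst h; simp [piKronecker]
  · obtain ⟨m, hm⟩ := Function.ne_iff.mp h
    simp [piKronecker, h, Finset.prod_eq_zero (Finset.mem_univ m), hm]

theorem piKronecker_one [DecidableEq ι] [CommMonoidWithZero R] :
    piKronecker (1 : κ → Matrix ι ι R) = 1 := by
  simpa [← Pi.one_def] using piKronecker_diagonal (κ := κ) (fun _ _ => (1 : R))

theorem star_piKronecker [CommMonoid R] [StarMul R] (A : κ → Matrix ι ι R) :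
    star (piKronecker A) = piKronecker (star A) := by
  ext i j
  simp [piKronecker, star_apply, star_prod]

end PiKronecker

end Matrix

section TensorPower

variable {d : ℕ}

theorem tensPow_eq_piKronecker (n : ℕ) (ρ : Matrix (Fin d) (Fin d) ℂ) :
    tensPow n ρ = piKronecker fun _ => ρ := rfl

theorem sumHam_eq_sum_piKronecker (n : ℕ) (H : Matrix (Fin d) (Fin d) ℂ) :
    sumHam n H = ∑ m, piKronecker (Function.update 1 m H) := by
  ext i j
  simp only [sumHam, piKronecker, of_apply, Matrix.sum_apply]
  refine Finset.sum_congr rfl fun m _ => ?_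
  rw [← Finset.mul_prod_erase _ _ (Finset.mem_univ m)]
  congr 1
  · simp
  · refine Finset.prod_congr rfl fun l hl => ?_
    simp [Function.update_of_ne (Finset.ne_of_mem_erase hl), one_apply]

theorem tensPow_mul (n : ℕ) (A B : Matrix (Fin d) (Fin d) ℂ) :
    tensPow n (A * B) = tensPow n A * tensPow n B := by
  simp only [tensPow_eq_piKronecker, piKronecker_mul]
  rfl

theorem tensPow_star (n : ℕ) (A : Matrix (Fin d) (Fin d) ℂ) :
    tensPow n (star A) = star (tensPow n A) := by
  simp only [tensPow_eq_piKronecker, star_piKronecker]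
  rfl

theorem tensPow_diagonal (n : ℕ) (v : Fin d → ℂ) :
    tensPow n (diagonal v) = diagonal fun a => ∏ m, v (a m) :=
  piKronecker_diagonal _

theorem tensPow_mem_unitaryGroup (n : ℕ) {W : Matrix (Fin d) (Fin d) ℂ}
    (hW : W ∈ unitaryGroup (Fin d) ℂ) : tensPow n W ∈ unitaryGroup (Fin n → Fin d) ℂ := by
  rw [mem_unitaryGroup_iff, ← tensPow_star, ← tensPow_mul, mem_unitaryGroup_iff.mp hW]
  exact piKronecker_one

theorem tensPow_unitary_conj (n : ℕ) (W ρ : Matrix (Fin d) (Fin d) ℂ) :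
    tensPow n (W * ρ * star W) = tensPow n W * tensPow n ρ * star (tensPow n W) := by
  rw [tensPow_mul, tensPow_mul, tensPow_star]

theorem sumHam_unitary_conj (n : ℕ) {W : Matrix (Fin d) (Fin d) ℂ}
    (hW : W ∈ unitaryGroup (Fin d) ℂ) (H : Matrix (Fin d) (Fin d) ℂ) :
    sumHam n (W * H * star W) = tensPow n W * sumHam n H * star (tensPow n W) := by
  simp only [sumHam_eq_sum_piKronecker, Finset.mul_sum, Finset.sum_mul, tensPow_eq_piKronecker,
    star_piKronecker, piKronecker_mul]
  refine Finset.sum_congr rfl fun m _ => congrArg piKronecker (funext fun l => ?_)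
  by_cases h : l = m
  · subst h; simp
  · simp [Function.update_of_ne h, mem_unitaryGroup_iff.mp hW]

theorem sumHam_diagonal (n : ℕ) (v : Fin d → ℂ) :
    sumHam n (diagonal v) = diagonal fun a => ∑ m, v (a m) := by
  have hupdate (m : Fin n) :
      Function.update (1 : Fin n → Matrix (Fin d) (Fin d) ℂ) m (diagonal v) =
        fun l => diagonal (Function.update (1 : Fin n → Fin d → ℂ) m v l) := by
    funext l
    by_cases h : l = m
    · subst h; simp
    · simp [Function.update_of_ne h]
  have hprod (m : Fin n) (a : Fin n → Fin d) :
      ∏ l, Function.update (1 : Fin n → Fin d → ℂ) m v l (a l) = v (a m) := by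
    rw [Finset.prod_eq_single m (fun l _ h => by simp [Function.update_of_ne h]) (by simp)]
    simp
  simp only [sumHam_eq_sum_piKronecker, hupdate, piKronecker_diagonal, hprod]
  ext a b
  simp only [Matrix.sum_apply, diagonal_apply]
  split_ifs <;> simp

end TensorPower

section Passivity

variable {ι κ : Type*} [Fintype ι] [Fintype κ]

theorem energy_map {F : Type*} [FunLike F (Matrix ι ι ℂ) (Matrix κ κ ℂ)]
    [MulHomClass F (Matrix ι ι ℂ) (Matrix κ κ ℂ)] {φ : F} (hφ : ∀ M, (φ M).trace = M.trace)
    (H ρ : Matrix ι ι ℂ) : energy (φ H) (φ ρ) = energy H ρ := by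
  rw [energy, energy, ← map_mul, hφ]

variable [DecidableEq ι] [DecidableEq κ]

theorem IsPassive.of_map {F : Type*} [FunLike F (Matrix ι ι ℂ) (Matrix κ κ ℂ)]
    [RingHomClass F (Matrix ι ι ℂ) (Matrix κ κ ℂ)] [StarHomClass F (Matrix ι ι ℂ) (Matrix κ κ ℂ)]
    {φ : F} (hφ : ∀ M, (φ M).trace = M.trace) {H σ : Matrix ι ι ℂ}
    (h : IsPassive (φ H) (φ σ)) : IsPassive H σ := by
  intro U hU
  have := h (φ U) (Unitary.map_mem φ hU)
  rwa [← map_star, ← map_mul, ← map_mul, energy_map hφ, energy_map hφ] at this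

theorem IsPassive.of_unitary_conj {W : Matrix ι ι ℂ} (hW : W ∈ unitaryGroup ι ℂ)
    {H σ : Matrix ι ι ℂ} (h : IsPassive (W * H * star W) (W * σ * star W)) : IsPassive H σ := by
  refine IsPassive.of_map (φ := Unitary.conjStarAlgAut ℂ _ ⟨W, hW⟩) (fun M => ?_) h
  simp [trace_mul_cycle, mem_unitaryGroup_iff'.mp hW]

theorem IsPassive.of_submatrix_equiv (g : κ ≃ ι) {H σ : Matrix ι ι ℂ}
    (h : IsPassive (H.submatrix g g) (σ.submatrix g g)) : IsPassive H σ := by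
  let φ : Matrix ι ι ℂ →⋆ₐ[ℂ] Matrix κ κ ℂ :=
    { (reindexAlgEquiv ℂ ℂ g.symm).toAlgHom with
      map_star' := fun M => (conjTranspose_reindex g.symm g.symm M).symm }
  refine IsPassive.of_map (φ := φ) (fun M => ?_) h
  change (M.submatrix g g).trace = M.trace
  simp [trace, g.sum_comp (fun i => M i i)]

theorem energy_diagonal (E P : ι → ℝ) :
    energy (diagonal fun i => (E i : ℂ)) (diagonal fun i => (P i : ℂ)) = ∑ i, P i * E i := by
  simp [energy, diagonal_mul_diagonal, trace_diagonal, ← Complex.ofReal_mul, Complex.re_sum]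

theorem permMatrix_conj_diagonal (s : Equiv.Perm ι) (v : ι → ℂ) :
    s.permMatrix ℂ * diagonal v * star (s.permMatrix ℂ) = diagonal (v ∘ s) := by
  simp [Equiv.Perm.permMatrix, star_eq_conjTranspose, PEquiv.toMatrix_toPEquiv_mul,
    PEquiv.mul_toMatrix_toPEquiv, Equiv.Perm.inv_def]

theorem permMatrix_mem_unitaryGroup (s : Equiv.Perm ι) : s.permMatrix ℂ ∈ unitaryGroup ι ℂ := by
  simp [mem_unitaryGroup_iff, star_eq_conjTranspose, ← permMatrix_mul]

theorem IsPassive.sum_mul_le_sum_comp_perm_mul {E P : ι → ℝ}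
    (h : IsPassive (diagonal fun i => (E i : ℂ)) (diagonal fun i => (P i : ℂ)))
    (s : Equiv.Perm ι) : ∑ i, P i * E i ≤ ∑ i, P (s i) * E i := by
  have := h _ (permMatrix_mem_unitaryGroup s)
  rwa [permMatrix_conj_diagonal, energy_diagonal, Function.comp_def, energy_diagonal] at this

theorem antivary_of_forall_sum_mul_le_sum_comp_perm_mul {f g : ι → ℝ}
    (h : ∀ s : Equiv.Perm ι, ∑ i, f i * g i ≤ ∑ i, f (s i) * g i) : Antivary f g := by
  refine antivary_iff_mul_rearrangement.2 fun i j => ?_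
  rcases eq_or_ne i j with rfl | hij
  · rfl
  have hswap : ∑ c, (f (Equiv.swap i j c) * g c - f c * g c) =
      (f j * g i - f i * g i) + (f i * g j - f j * g j) := by
    rw [Fintype.sum_eq_add i j hij fun c hc => by simp [Equiv.swap_apply_of_ne_of_ne hc.1 hc.2]]
    simp
  have := h (Equiv.swap i j)
  rw [Finset.sum_sub_distrib] at hswap
  linarith

theorem IsPassive.antivary_of_diagonal {E P : ι → ℝ}
    (h : IsPassive (diagonal fun i => (E i : ℂ)) (diagonal fun i => (P i : ℂ))) :
    Antivary P E :=
  antivary_of_forall_sum_mul_le_sum_comp_perm_mul h.sum_mul_le_sum_comp_perm_mul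

end Passivity

section Commute

variable {ι : Type*} [Fintype ι] [DecidableEq ι]

open NormedSpace

theorem exp_mem_unitaryGroup_of_star_eq_neg {X : Matrix ι ι ℂ} (hX : star X = -X) :
    exp X ∈ unitaryGroup ι ℂ := by
  have hstar : star (exp X) = exp (-X) := by
    rw [← hX]
    exact (Matrix.exp_conjTranspose X).symm
  rw [mem_unitaryGroup_iff, hstar, ← Matrix.exp_add_of_commute _ _ (Commute.refl X).neg_right,
    add_neg_cancel, exp_zero]

section Derivative

-- any norm will do: the statement only involves the (norm-independent) topology of matrices
attribute [local instance] Matrix.linftyOpNormedRing Matrix.linftyOpNormedAlgebra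

theorem hasDerivAt_energy_exp_conj (H X σ : Matrix ι ι ℂ) :
    HasDerivAt (fun t : ℝ => energy H (exp (t • X) * σ * star (exp (t • X))))
      (energy H (X * σ + σ * star X)) 0 := by
  have hstar (t : ℝ) : star (exp (t • X)) = exp (t • star X) := by
    rw [star_exp, star_smul, star_trivial]
  have hX := hasDerivAt_exp_smul_const (𝕂 := ℝ) X 0
  have hXs := hasDerivAt_exp_smul_const (𝕂 := ℝ) (star X) 0
  have hconj := (hX.mul_const σ).mul hXs
  simp only [zero_smul, exp_zero, mul_one, one_mul] at hconj
  let energyL : Matrix ι ι ℂ →ₗ[ℝ] ℝ :=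
    { toFun := energy H
      map_add' := fun _ _ => by simp [energy, add_mul]
      map_smul' := fun _ _ => by simp [energy, trace_smul] }
  simp_rw [hstar]
  exact (LinearMap.toContinuousLinearMap energyL).hasFDerivAt.comp_hasDerivAt 0 hconj

end Derivative

theorem IsPassive.commute {H σ : Matrix ι ι ℂ} (hH : H.IsHermitian) (hσ : σ.IsHermitian)
    (h : IsPassive H σ) : Commute σ H := by
  set X := σ * H - H * σ with hXdef
  have hX : star X = -X := by
    simp only [X, star_sub, star_mul, star_eq_conjTranspose, hH.eq, hσ.eq, neg_sub]
  have hmin : IsLocalMin (fun t : ℝ => energy H (exp (t • X) * σ * star (exp (t • X)))) 0 := by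
    refine Filter.Eventually.of_forall fun t => ?_
    have hskew : star (t • X) = -(t • X) := by rw [star_smul, star_trivial, hX, smul_neg]
    simpa using h _ (exp_mem_unitaryGroup_of_star_eq_neg hskew)
  have hvar : energy H (X * σ + σ * star X) = -(star X * X).trace.re := by
    calc energy H (X * σ + σ * star X) = ((X * σ * H).trace - (σ * X * H).trace).re := by
          simp [hX, energy, ← sub_eq_add_neg, sub_mul, trace_sub]
      _ = (X * X).trace.re := by
          rw [mul_assoc σ, trace_mul_comm σ, mul_assoc, mul_assoc, ← trace_sub, ← mul_sub]
      _ = -(star X * X).trace.re := by simp [hX]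
  have hzero : (star X * X).trace = 0 := by
    have hre : (star X * X).trace.re = 0 := by
      linarith [hvar ▸ (hmin.hasDerivAt_eq_zero (hasDerivAt_energy_exp_conj H X σ))]
    have hnonneg := (posSemidef_conjTranspose_mul_self X).trace_nonneg
    rw [← star_eq_conjTranspose, Complex.nonneg_iff] at hnonneg
    exact Complex.ext hre hnonneg.2.symm
  rwa [star_eq_conjTranspose, trace_conjTranspose_mul_self_eq_zero_iff, hXdef, sub_eq_zero] at hzero

end Commute

section JointDiagonalization

variable {ι : Type*} [Fintype ι] [DecidableEq ι]

theorem apply_eq_zero_of_commute_diagonal {τ : Matrix ι ι ℂ} {v : ι → ℂ}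
    (h : Commute τ (diagonal v)) {i j : ι} (hij : v i ≠ v j) : τ i j = 0 := by
  have hij' : τ i j * v j = v i * τ i j := by
    simpa [mul_diagonal, diagonal_mul] using congrFun (congrFun h.eq i) j
  have : τ i j * (v j - v i) = 0 := by linear_combination hij'
  exact (mul_eq_zero.mp this).resolve_right (sub_ne_zero.mpr hij.symm)

theorem submatrix_sigmaFiberEquiv_eq_blockDiagonal' (e : ι → ℝ) {τ : Matrix ι ι ℂ}
    (h : Commute τ (diagonal fun i => (e i : ℂ))) :
    τ.submatrix (Equiv.sigmaFiberEquiv (Set.rangeFactorization e))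
        (Equiv.sigmaFiberEquiv (Set.rangeFactorization e)) =
      blockDiagonal' fun _ => τ.submatrix Subtype.val Subtype.val := by
  ext ⟨r, i⟩ ⟨s, j⟩
  rcases eq_or_ne r s with rfl | hrs
  · simp [blockDiagonal'_apply_eq]
  · rw [blockDiagonal'_apply_ne _ _ _ hrs]
    refine apply_eq_zero_of_commute_diagonal h fun hij => hrs ?_
    rw [← i.2, ← j.2]
    exact Subtype.ext (by exact_mod_cast hij)

theorem exists_unitary_diagonal_of_commute_diagonal (e : ι → ℝ) {τ : Matrix ι ι ℂ}
    (hτ : τ.IsHermitian) (h : Commute τ (diagonal fun i => (e i : ℂ))) :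
    ∃ V ∈ unitaryGroup ι ℂ, ∃ q : ι → ℝ, Commute V (diagonal fun i => (e i : ℂ)) ∧
      τ = V * diagonal (fun i => (q i : ℂ)) * star V := by
  -- grouping the indices by the value of `e`, `τ` is block diagonal: diagonalize each block
  set g := Equiv.sigmaFiberEquiv (Set.rangeFactorization e)
  let φ := reindexAlgEquiv ℂ ℂ g
  have hφstar (M) : φ (star M) = star (φ M) := (conjTranspose_reindex g g M).symm
  let τb (r : Set.range e) : Matrix {i // Set.rangeFactorization e i = r}
      {i // Set.rangeFactorization e i = r} ℂ := τ.submatrix Subtype.val Subtype.val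
  have hτb (r) : (τb r).IsHermitian := hτ.submatrix _
  let U (r) : Matrix {i // Set.rangeFactorization e i = r}
      {i // Set.rangeFactorization e i = r} ℂ := (hτb r).eigenvectorUnitary
  have hτ_eq : τ = φ (blockDiagonal' τb) := by
    rw [← submatrix_sigmaFiberEquiv_eq_blockDiagonal' e h]
    simp [φ, g]
  have hD_eq : diagonal (fun i => (e i : ℂ)) = φ (blockDiagonal' fun r => (r.1 : ℂ) • 1) := by
    simp only [smul_one_eq_diagonal, blockDiagonal'_diagonal, φ, coe_reindexAlgEquiv,
      reindex_apply, submatrix_diagonal_equiv]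
    rfl
  have hQ : diagonal (fun i => ((hτb _).eigenvalues ⟨i, rfl⟩ : ℂ)) =
      φ (blockDiagonal' fun r => diagonal fun j => ((hτb r).eigenvalues j : ℂ)) := by
    simp only [blockDiagonal'_diagonal, φ, coe_reindexAlgEquiv, reindex_apply,
      submatrix_diagonal_equiv]
    rfl
  refine ⟨φ (blockDiagonal' U), ?_, fun i => (hτb _).eigenvalues ⟨i, rfl⟩, ?_, ?_⟩
  · rw [mem_unitaryGroup_iff, ← hφstar, ← map_mul, star_eq_conjTranspose,
      blockDiagonal'_conjTranspose, ← blockDiagonal'_mul]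
    have hU : (fun r => U r * (U r)ᴴ) = 1 :=
      funext fun r => mem_unitaryGroup_iff.mp (hτb r).eigenvectorUnitary.2
    rw [hU, blockDiagonal'_one, map_one]
  · rw [hD_eq]
    refine Commute.map ?_ φ
    simp only [Commute, SemiconjBy, ← blockDiagonal'_mul]
    congr 1
    funext r
    simp
  · rw [hτ_eq, hQ, ← hφstar, ← map_mul, ← map_mul, star_eq_conjTranspose,
      blockDiagonal'_conjTranspose, ← blockDiagonal'_mul, ← blockDiagonal'_mul]
    refine congrArg (fun M => φ (blockDiagonal' M)) (funext fun r => ?_)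
    simpa [U, star_eq_conjTranspose, Function.comp_def] using (hτb r).spectral_theorem

theorem Matrix.IsHermitian.exists_unitary_diagonal_of_commute {A B : Matrix ι ι ℂ}
    (hA : A.IsHermitian) (hB : B.IsHermitian) (hAB : Commute A B) :
    ∃ W ∈ unitaryGroup ι ℂ, ∃ a b : ι → ℝ,
      A = W * diagonal (fun i => (a i : ℂ)) * star W ∧
      B = W * diagonal (fun i => (b i : ℂ)) * star W := by
  set ψ := Unitary.conjStarAlgAut ℂ _ hA.eigenvectorUnitary
  set D := diagonal fun i => (hA.eigenvalues i : ℂ)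
  have hA_eq : A = ψ D := hA.spectral_theorem
  have hτ : (ψ.symm B).IsHermitian := by
    rw [IsHermitian, ← star_eq_conjTranspose, ← map_star, star_eq_conjTranspose, hB.eq]
  have hτD : Commute (ψ.symm B) D := by
    simpa [hA_eq] using (hAB.symm.map ψ.symm)
  obtain ⟨V, hV, b, hVD, hτ_eq⟩ := exists_unitary_diagonal_of_commute_diagonal _ hτ hτD
  have hψ (M : Matrix ι ι ℂ) : ψ (V * M * star V) =
      (hA.eigenvectorUnitary * V) * M * star (hA.eigenvectorUnitary * V : Matrix ι ι ℂ) := by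
    simp [ψ, mul_assoc]
  refine ⟨_, mul_mem hA.eigenvectorUnitary.2 hV, hA.eigenvalues, b, ?_, ?_⟩
  · rw [← hψ, hVD.eq, mul_assoc, mem_unitaryGroup_iff.mp hV, mul_one]
    exact hA_eq
  · rw [← hψ, ← hτ_eq, StarAlgEquiv.apply_symm_apply]

end JointDiagonalization

section UnitaryConjDiagonal

variable {ι : Type*} [Fintype ι] [DecidableEq ι] {W : Matrix ι ι ℂ}

open NormedSpace

theorem exists_lt_of_forall_ne_smul_one (hW : W ∈ unitaryGroup ι ℂ) {e : ι → ℝ}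
    (h : ∀ c : ℂ, W * diagonal (fun i => (e i : ℂ)) * star W ≠ c • 1) : ∃ i j, e i < e j := by
  by_contra! hle
  rcases isEmpty_or_nonempty ι with hι | ⟨⟨i₀⟩⟩
  · exact h 0 (Subsingleton.elim _ _)
  · refine h (e i₀) ?_
    have he : (fun i => (e i : ℂ)) = fun _ => (e i₀ : ℂ) :=
      funext fun i => by rw [le_antisymm (hle i₀ i) (hle i i₀)]
    rw [he, ← smul_one_eq_diagonal, Matrix.mul_smul, mul_one, Matrix.smul_mul,
      mem_unitaryGroup_iff.mp hW]

theorem pos_of_posDef_unitary_conj_diagonal (hW : W ∈ unitaryGroup ι ℂ) {q : ι → ℝ}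
    (h : (W * diagonal (fun i => (q i : ℂ)) * star W).PosDef) (i : ι) : 0 < q i := by
  have := (Unitary.isUnit_coe (U := ⟨W, hW⟩)).posDef_star_right_conjugate_iff.mp h
  exact_mod_cast posDef_diagonal_iff.mp this i

theorem exp_smul_unitary_conj_diagonal (hW : W ∈ unitaryGroup ι ℂ) (t : ℂ) (v : ι → ℂ) :
    exp (t • (W * diagonal v * star W)) =
      W * diagonal (fun i => Complex.exp (t * v i)) * star W := by
  have hinv : W⁻¹ = star W := inv_eq_left_inv (mem_unitaryGroup_iff'.mp hW)
  rw [← Matrix.smul_mul, ← Matrix.mul_smul, ← hinv,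
    Matrix.exp_conj _ _ (Unitary.isUnit_coe (U := ⟨W, hW⟩)), ← diagonal_smul, Matrix.exp_diagonal]
  congr
  funext i
  simp [Complex.exp_eq_exp_ℂ]

theorem unitary_conj_diagonal_eq_smul_exp (hW : W ∈ unitaryGroup ι ℂ) {e q : ι → ℝ} {β C : ℝ}
    (hq : ∀ i, q i = Real.exp (C - β * e i)) :
    W * diagonal (fun i => (q i : ℂ)) * star W =
      (Real.exp C : ℂ) • exp ((-β : ℂ) • (W * diagonal (fun i => (e i : ℂ)) * star W)) := by
  rw [exp_smul_unitary_conj_diagonal hW, ← Matrix.smul_mul, ← Matrix.mul_smul, ← diagonal_smul]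
  congr
  funext i
  rw [hq i]
  push_cast
  rw [Pi.smul_apply, smul_eq_mul, ← Complex.exp_add]
  ring_nf

theorem eq_gibbs_of_eq_smul_exp {H σ : Matrix ι ι ℂ} {β : ℝ} {k : ℂ}
    (hσ : σ = k • exp ((-β : ℂ) • H)) (htr : σ.trace = 1) : σ = gibbs H β := by
  have hk : k * (exp ((-β : ℂ) • H)).trace = 1 := by rw [← htr, hσ, trace_smul, smul_eq_mul]
  rw [gibbs, ← eq_inv_of_mul_eq_one_left hk, hσ]

end UnitaryConjDiagonal

theorem mul_le_mul_of_forall_int_combination {a b c d : ℝ} (hc : 0 < c)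
    (h : ∀ M N : ℤ, 0 < M * a + N * c → 0 ≤ M * b + N * d) : b * c ≤ a * d := by
  have hd : 0 ≤ d := by simpa using h 0 1 (by simpa using hc)
  by_contra! hlt
  obtain ⟨m, hm⟩ := exists_nat_gt (c * d / (b * c - a * d))
  rw [div_lt_iff₀ (by linarith)] at hm
  -- `N` is chosen so that `-c ≤ m a + N c < 0`
  set N : ℤ := ⌈-(m * a) / c⌉ - 1
  have hN₁ : (N : ℝ) * c < -(m * a) := by
    have := Int.ceil_lt_add_one (-(m * a) / c)
    rw [← lt_div_iff₀ hc]
    push_cast [N]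
    linarith
  have hN₂ : -(m * a) - c ≤ N * c := by
    have := Int.le_ceil (-(m * a) / c)
    rw [div_le_iff₀ hc] at this
    push_cast [N]
    nlinarith
  have := h (-m) (-N) (by push_cast; linarith)
  push_cast at this
  nlinarith

theorem mul_eq_mul_of_forall_int_combination {a b c d : ℝ} (hc : 0 < c)
    (h : ∀ M N : ℤ, 0 < M * a + N * c → 0 ≤ M * b + N * d) : b * c = a * d := by
  refine le_antisymm (mul_le_mul_of_forall_int_combination hc h) ?_
  have := mul_le_mul_of_forall_int_combination (a := -a) (b := -b) hc fun M N hMN => by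
    simpa using h (-M) N (by push_cast; linarith)
  linarith

theorem sum_fin_append_const {ι : Type*} (f : ι → ℝ) (m n : ℕ) (i k : ι) :
    ∑ l, f (Fin.append (fun _ : Fin m => i) (fun _ : Fin n => k) l) = m * f i + n * f k := by
  simp [Fin.sum_univ_add]

theorem exists_eq_sub_mul_of_antivary_sum {ι : Type*} {e x : ι → ℝ} {i₀ j₀ : ι}
    (h₀ : e i₀ < e j₀)
    (h : ∀ N : ℕ, Antivary (fun a : Fin N → ι => ∑ m, x (a m)) fun a => ∑ m, e (a m)) :
    ∃ β, 0 ≤ β ∧ ∃ C, ∀ i, x i = C - β * e i := by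
  have htwo (m n : ℕ) (i j k l : ι) (hlt : m * e i + n * e k < m * e j + n * e l) :
      m * x j + n * x l ≤ m * x i + n * x k := by
    simpa only [sum_fin_append_const] using
      h (m + n) (i := Fin.append (fun _ => i) fun _ => k) (j := Fin.append (fun _ => j) fun _ => l)
        (by simpa only [sum_fin_append_const] using hlt)
  -- exchanging `i, j` or `k, l` flips signs, so integer coefficients of either sign are allowed
  have hint (i j k l : ι) (M N : ℤ) (hpos : 0 < M * (e j - e i) + N * (e l - e k)) :
      0 ≤ M * (x i - x j) + N * (x k - x l) := by
    obtain ⟨m, rfl | rfl⟩ := Int.eq_nat_or_neg M <;> obtain ⟨n, rfl | rfl⟩ := Int.eq_nat_or_neg N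
    · have := htwo m n i j k l (by push_cast at hpos; linarith); push_cast; linarith
    · have := htwo m n i j l k (by push_cast at hpos; linarith); push_cast; linarith
    · have := htwo m n j i k l (by push_cast at hpos; linarith); push_cast; linarith
    · have := htwo m n j i l k (by push_cast at hpos; linarith); push_cast; linarith
  have hc : 0 < e j₀ - e i₀ := sub_pos.mpr h₀
  refine ⟨(x i₀ - x j₀) / (e j₀ - e i₀), div_nonneg ?_ hc.le,
    x i₀ + (x i₀ - x j₀) / (e j₀ - e i₀) * e i₀, fun i => ?_⟩
  · simpa using hint i₀ j₀ i₀ j₀ 0 1 (by simpa using hc)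
  · have := mul_eq_mul_of_forall_int_combination hc (hint i₀ i i₀ j₀)
    field_simp
    linarith

section CompletePassivity

variable {d : ℕ}

theorem antivary_of_isPassive_sumHam {n : ℕ} {W : Matrix (Fin d) (Fin d) ℂ}
    (hW : W ∈ unitaryGroup (Fin d) ℂ) {e q : Fin d → ℝ}
    (h : IsPassive (sumHam n (W * diagonal (fun i => (e i : ℂ)) * star W))
      (tensPow n (W * diagonal (fun i => (q i : ℂ)) * star W))) :
    Antivary (fun a : Fin n → Fin d => ∏ m, q (a m)) fun a => ∑ m, e (a m) := by
  rw [sumHam_unitary_conj n hW, tensPow_unitary_conj, sumHam_diagonal, tensPow_diagonal] at h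
  refine IsPassive.antivary_of_diagonal
    (IsPassive.of_unitary_conj (tensPow_mem_unitaryGroup n hW) ?_)
  simpa using h

theorem antivary_sum_log_of_completelyPassive {W : Matrix (Fin d) (Fin d) ℂ}
    (hW : W ∈ unitaryGroup (Fin d) ℂ) {e q : Fin d → ℝ} (hq : ∀ i, 0 < q i)
    (hcp : ∀ n : ℕ, 1 ≤ n → IsPassive (sumHam n (W * diagonal (fun i => (e i : ℂ)) * star W))
      (tensPow n (W * diagonal (fun i => (q i : ℂ)) * star W))) (N : ℕ) :
    Antivary (fun a : Fin N → Fin d => ∑ m, Real.log (q (a m))) fun a => ∑ m, e (a m) := by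
  rcases N.eq_zero_or_pos with rfl | hN
  · simp [Antivary]
  · intro a b hab
    have := antivary_of_isPassive_sumHam hW (hcp N hN) hab
    rw [← Real.exp_le_exp, Real.exp_sum, Real.exp_sum]
    simpa [Real.exp_log (hq _)] using this

theorem isPassive_of_isPassive_sumHam_one {H σ : Matrix (Fin d) (Fin d) ℂ}
    (h : IsPassive (sumHam 1 H) (tensPow 1 σ)) : IsPassive H σ := by
  refine IsPassive.of_submatrix_equiv (Equiv.funUnique (Fin 1) (Fin d)) ?_
  convert h using 1 <;> ext i j <;> simp [sumHam, tensPow]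

end CompletePassivity

theorem completely_passive_is_gibbs {d : ℕ} (H σ : Matrix (Fin d) (Fin d) ℂ)
    (hH : H.IsHermitian) (hns : ∀ c : ℂ, H ≠ c • 1)
    (hσ : σ.PosDef) (htr : σ.trace = 1)
    (hcp : ∀ n : ℕ, 1 ≤ n → IsPassive (sumHam n H) (tensPow n σ)) :
    ∃ β : ℝ, 0 ≤ β ∧ σ = gibbs H β := by
  have hcomm := (isPassive_of_isPassive_sumHam_one (hcp 1 le_rfl)).commute hH hσ.isHermitian
  obtain ⟨W, hW, e, q, rfl, rfl⟩ := hH.exists_unitary_diagonal_of_commute hσ.isHermitian hcomm.symm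
  have hq := pos_of_posDef_unitary_conj_diagonal hW hσ
  obtain ⟨i₀, j₀, h₀⟩ := exists_lt_of_forall_ne_smul_one hW hns
  obtain ⟨β, hβ, C, hC⟩ := exists_eq_sub_mul_of_antivary_sum (x := fun i => Real.log (q i)) h₀
    (antivary_sum_log_of_completelyPassive hW hq hcp)
  refine ⟨β, hβ, eq_gibbs_of_eq_smul_exp
    (unitary_conj_diagonal_eq_smul_exp (C := C) hW fun i => ?_) htr⟩
  rw [← hC i, Real.exp_log (hq i)]
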